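/- arXiv:2301.09511 — 5 statements merged into one kernel-verified Lean document; each statement's English description precedes it below -/
import Mathlib

section
/- Suppose f : ℝⁿ → ℝ is differentiable with L-Lipschitz gradient and satisfies the PL inequality 2μ(f(x) − f*) ≤ ‖∇f(x)‖² with 0 < μ ≤ L/2. Then gradient descent with fixed stepsize 0 < t ≤ 1/L, x^{(k+1)} = x^{(k)} − t∇f(x^{(k)}), satisfies f(x^{(k)}) − f* ≤ (1 − tμ)^k (f(x^{(0)}) − f*) for all k. -/
/-!
By the descent lemma, a gradient step of length `t ≤ 1/L` decreases `f` by at least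
`t/2 ‖∇f(x)‖²`, and the PL inequality bounds this decrease below by `tμ (f(x) − f*)`.
Hence the gap `f(x⁽ᵏ⁾) − f*` contracts at every step by the factor `1 − tμ`, which
`μ ≤ L/2` keeps nonnegative.
-/

open Set

variable {E : Type*} [NormedAddCommGroup E] [InnerProductSpace ℝ E] [CompleteSpace E]
  {f : E → ℝ} {L : ℝ}

theorem hasDerivAt_comp_add_smul (hf : Differentiable ℝ f) (u d : E) (s : ℝ) :
    HasDerivAt (fun s : ℝ => f (u + s • d)) (inner ℝ (gradient f (u + s • d)) d) s := by
  have hline : HasDerivAt (fun s : ℝ => u + s • d) d s := by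
    simpa using ((hasDerivAt_id s).smul_const d).const_add u
  exact ((hf (u + s • d)).hasFDerivAt.comp_hasDerivAt s hline).congr_deriv
    (inner_gradient_left ..).symm

/-- The descent lemma. -/
theorem image_add_le_of_lipschitz_gradient (hf : Differentiable ℝ f)
    (hLip : ∀ x y, ‖gradient f x - gradient f y‖ ≤ L * ‖x - y‖) (u d : E) :
    f (u + d) ≤ f u + inner ℝ (gradient f u) d + L / 2 * ‖d‖ ^ 2 := by
  -- `φ 1 ≤ φ 0` is the claim, and `φ` is antitone on `[0, 1]` since `∇f` is `L`-Lipschitz.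
  set φ : ℝ → ℝ := fun s =>
    f (u + s • d) - s * inner ℝ (gradient f u) d - L / 2 * s ^ 2 * ‖d‖ ^ 2
  have hφ' : ∀ s, HasDerivAt φ
      (inner ℝ (gradient f (u + s • d) - gradient f u) d - L * s * ‖d‖ ^ 2) s := by
    intro s
    have hsq : HasDerivAt (fun s : ℝ => L / 2 * s ^ 2 * ‖d‖ ^ 2) (L * s * ‖d‖ ^ 2) s :=
      (((hasDerivAt_pow 2 s).const_mul (L / 2)).mul_const (‖d‖ ^ 2)).congr_deriv
        (by push_cast; ring)
    exact (((hasDerivAt_comp_add_smul hf u d s).sub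
      ((hasDerivAt_id s).mul_const (inner ℝ (gradient f u) d))).sub hsq).congr_deriv
      (by rw [inner_sub_left, one_mul])
  have hslope : ∀ s, 0 ≤ s →
      inner ℝ (gradient f (u + s • d) - gradient f u) d ≤ L * s * ‖d‖ ^ 2 := fun s hs =>
    calc inner ℝ (gradient f (u + s • d) - gradient f u) d
        ≤ ‖gradient f (u + s • d) - gradient f u‖ * ‖d‖ := real_inner_le_norm _ _
      _ ≤ L * ‖(u + s • d) - u‖ * ‖d‖ := by gcongr; exact hLip _ _
      _ = L * s * ‖d‖ ^ 2 := by simp [norm_smul, abs_of_nonneg hs]; ring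
  have hanti : AntitoneOn φ (Icc 0 1) :=
    antitoneOn_of_hasDerivWithinAt_nonpos (convex_Icc 0 1)
      (fun s _ => (hφ' s).continuousAt.continuousWithinAt)
      (fun s _ => (hφ' s).hasDerivWithinAt)
      (fun s hs => sub_nonpos.2 (hslope s (interior_subset hs).1))
  have h := hanti (left_mem_Icc.2 zero_le_one) (right_mem_Icc.2 zero_le_one) zero_le_one
  norm_num [φ, -inner_gradient_left] at h
  linarith

theorem image_sub_smul_gradient_le (hf : Differentiable ℝ f)
    (hLip : ∀ x y, ‖gradient f x - gradient f y‖ ≤ L * ‖x - y‖)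
    {t : ℝ} (ht : 0 ≤ t) (htL : t * L ≤ 1) (u : E) :
    f (u - t • gradient f u) ≤ f u - t / 2 * ‖gradient f u‖ ^ 2 := by
  have h := image_add_le_of_lipschitz_gradient hf hLip u (-(t • gradient f u))
  rw [← sub_eq_add_neg, inner_neg_right, real_inner_smul_right, real_inner_self_eq_norm_sq,
    norm_neg, norm_smul, Real.norm_of_nonneg ht] at h
  linarith [mul_le_mul_of_nonneg_right htL (mul_nonneg ht (sq_nonneg ‖gradient f u‖))]

theorem stmt_1_general (n : ℕ) (f : EuclideanSpace ℝ (Fin n) → ℝ) (L μ t fstar : ℝ)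
    (hdiff : Differentiable ℝ f)
    (hL : 0 < L)
    (hLip : ∀ x y, ‖gradient f x - gradient f y‖ ≤ L * ‖x - y‖)
    (hμL : μ ≤ L / 2)
    (hPL : ∀ x, 2 * μ * (f x - fstar) ≤ ‖gradient f x‖ ^ 2)
    (ht : 0 < t) (htL : t ≤ 1 / L)
    (x : ℕ → EuclideanSpace ℝ (Fin n))
    (hupdate : ∀ k, x (k + 1) = x k - t • gradient f (x k)) :
    ∀ k, f (x k) - fstar ≤ (1 - t * μ) ^ k * (f (x 0) - fstar) := by
  have htL' : t * L ≤ 1 := (le_div_iff₀ hL).1 htL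
  have hrate : 0 ≤ 1 - t * μ := by linarith [mul_le_mul_of_nonneg_left hμL ht.le]
  intro k
  refine le_geom (u := fun k => f (x k) - fstar) hrate k fun k _ => ?_
  have hstep := image_sub_smul_gradient_le hdiff hLip ht.le htL' (x k)
  rw [← hupdate k] at hstep
  linarith [mul_le_mul_of_nonneg_left (hPL (x k)) (half_pos ht).le]

/-- Theorem 1 of Karimi-Nutini-Schmidt: exact-arithmetic linear
convergence of gradient descent under the Polyak–Łojasiewicz inequality.  If
`f` is differentiable with `L`-Lipschitz gradient, satisfies the PL inequality
with `0 < μ ≤ L/2`, attains its minimum value `f*`, and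
`x^{(k+1)} = x^{(k)} − t·∇f(x^{(k)})` with `0 < t ≤ 1/L`, then
`f(x^{(k)}) − f* ≤ (1 − tμ)^k (f(x^{(0)}) − f*)` for all `k`. -/
theorem stmt_1 (n : ℕ) (f : EuclideanSpace ℝ (Fin n) → ℝ) (L μ t fstar : ℝ)
    (hdiff : Differentiable ℝ f)
    (hL : 0 < L)
    (hLip : ∀ x y, ‖gradient f x - gradient f y‖ ≤ L * ‖x - y‖)
    (hμ : 0 < μ) (hμL : μ ≤ L / 2)
    (hfstar : ∀ x, fstar ≤ f x) (hattain : ∃ x, f x = fstar)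
    (hPL : ∀ x, 2 * μ * (f x - fstar) ≤ ‖gradient f x‖ ^ 2)
    (ht : 0 < t) (htL : t ≤ 1 / L)
    (x : ℕ → EuclideanSpace ℝ (Fin n))
    (hupdate : ∀ k, x (k + 1) = x k - t • gradient f (x k)) :
    ∀ k, f (x k) - fstar ≤ (1 - t * μ) ^ k * (f (x 0) - fstar) :=
  stmt_1_general n f L μ t fstar hdiff hL hLip hμL hPL ht htL x hupdate
end

section
/- Let g, σ₂ be real random variables such that σ₂ has conditional values determined as in the SR_ε rounding of t(g + σ₁) with sign(g + σ₁) = sign(g) ≠ 0 (non-opposite sign condition |σ₁| ≤ |g|), where: if the rounding probability p_ε is strictly in (0,1) then E[σ₂ | g, σ₁] = ε·u·sign(g+σ₁); if p_ε = 0 then σ₂ = ⌊t(g+σ₁)⌋ − t(g+σ₁) + u which has the same sign as g+σ₁; if p_ε = 1 then σ₂ = ⌊t(g+σ₁)⌋ − t(g+σ₁) which has the same sign as g+σ₁. Then E[σ₂ · g] > 0. -/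
/-!
Let `S` be the set where `E[σ₂ | g, σ₁] = ε u sign g`; it is measurable for the conditioning
σ-algebra. On `S` we may replace `σ₂ g` by `E[σ₂ g | g, σ₁] = g E[σ₂ | g, σ₁] = ε u |g| > 0`
without changing its integral over `S`, and off `S` the rounding is deterministic with
`sign σ₂ = sign g`, so `σ₂ g > 0` there. Hence `E[σ₂ g]` is the integral of an a.e. positive
function.
-/

open MeasureTheory

theorem Real.measurable_sign : Measurable Real.sign :=
  Measurable.ite measurableSet_Iio measurable_const
    (Measurable.ite measurableSet_Ioi measurable_const measurable_const)

theorem Real.mul_pos_of_sign_eq {a b : ℝ} (h : Real.sign a = Real.sign b) (hb : b ≠ 0) :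
    0 < a * b := by
  rcases lt_trichotomy a 0 with ha | ha | ha <;> rcases hb.lt_or_gt with hb | hb <;>
    simp only [Real.sign_of_neg, Real.sign_of_pos, Real.sign_zero, ha, hb] at h <;> nlinarith

theorem integral_pos_of_ae_pos {α : Type*} [MeasurableSpace α] {μ : Measure α} [NeZero μ]
    {f : α → ℝ} (hf : Integrable f μ) (hpos : ∀ᵐ x ∂μ, 0 < f x) : 0 < ∫ x, f x ∂μ := by
  rw [integral_pos_iff_support_of_nonneg_ae (hpos.mono fun _ h => h.le) hf]
  have : Function.support f =ᵐ[μ] (Set.univ : Set α) :=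
    Filter.eventuallyEq_set.2 (hpos.mono fun x h => by simpa using h.ne')
  rw [measure_congr this]
  exact Measure.measure_univ_pos.2 (NeZero.ne μ)

theorem integral_eq_integral_piecewise_condExp {α : Type*} {m m₀ : MeasurableSpace α}
    {μ : Measure α} (hm : m ≤ m₀) [SigmaFinite (μ.trim hm)] {s : Set α} [DecidablePred (· ∈ s)]
    (hs : MeasurableSet[m] s) {f : α → ℝ} (hf : Integrable f μ) :
    ∫ x, f x ∂μ = ∫ x, s.piecewise (μ[f|m]) f x ∂μ := by
  rw [integral_piecewise (hm s hs) integrable_condExp.integrableOn hf.integrableOn,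
    setIntegral_condExp hm hf hs, integral_add_compl (hm s hs) hf]

theorem integral_mul_pos_of_ae_condExp_eq_sign_or_sign_eq {Ω : Type*} {m m₀ : MeasurableSpace Ω}
    {μ : Measure Ω} [IsProbabilityMeasure μ] {f g : Ω → ℝ} {c : ℝ} (hc : 0 < c)
    (hg : StronglyMeasurable[m] g) (hg0 : ∀ᵐ ω ∂μ, g ω ≠ 0)
    (hfg : Integrable (fun ω => f ω * g ω) μ)
    (h : ∀ᵐ ω ∂μ, μ[f|m] ω = c * Real.sign (g ω) ∨ Real.sign (f ω) = Real.sign (g ω)) :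
    0 < ∫ ω, f ω * g ω ∂μ := by
  classical
  by_cases hreg : m ≤ m₀ ∧ Integrable f μ
  swap
  · -- `μ[f|m]` is the junk value `0` here, which never equals `c * sign (g ω)`.
    have h0 : μ[f|m] = 0 := by
      rcases not_and_or.1 hreg with hm | hf
      exacts [condExp_of_not_le hm, condExp_of_not_integrable hf]
    refine integral_pos_of_ae_pos hfg ?_
    filter_upwards [h, hg0] with ω hω hgω
    have hcω : μ[f|m] ω ≠ c * Real.sign (g ω) := by
      simp [h0, hc.ne', Real.sign_eq_zero_iff, hgω]
    exact Real.mul_pos_of_sign_eq (hω.resolve_left hcω) hgω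
  obtain ⟨hm, hf⟩ := hreg
  set S := {ω | μ[f|m] ω = c * Real.sign (g ω)}
  have hS : MeasurableSet[m] S :=
    measurableSet_eq_fun stronglyMeasurable_condExp.measurable
      (measurable_const.mul (Real.measurable_sign.comp hg.measurable))
  have hpos_on : ∀ᵐ ω ∂μ, ω ∈ S → 0 < μ[f * g|m] ω := by
    filter_upwards [condExp_mul_of_stronglyMeasurable_right hg hfg hf, hg0] with ω hω hgω hωS
    rw [hω, Pi.mul_apply, hωS, mul_assoc]
    exact mul_pos hc (Real.sign_mul_pos_of_ne_zero _ hgω)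
  have hpos_off : ∀ᵐ ω ∂μ, ω ∉ S → 0 < f ω * g ω := by
    filter_upwards [h, hg0] with ω hω hgω hωS
    exact Real.mul_pos_of_sign_eq (hω.resolve_left hωS) hgω
  rw [integral_eq_integral_piecewise_condExp hm hS hfg]
  refine integral_pos_of_ae_pos
    (.piecewise (hm S hS) integrable_condExp.integrableOn hfg.integrableOn) ?_
  filter_upwards [hpos_on, hpos_off] with ω h_on h_off
  by_cases hωS : ω ∈ S
  · rw [Set.piecewise_eq_of_mem _ _ _ hωS]; exact h_on hωS
  · rw [Set.piecewise_eq_of_notMem _ _ _ hωS]; exact h_off hωS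

/-- Lemma srh_dk: with the non-opposite sign condition
(`sign(g+σ₁) = sign(g) ≠ 0`), if the rounding error `σ₂` of `SR_ε` applied to
`t(g+σ₁)` satisfies, almost everywhere, either the interior condition
`E[σ₂ | g, σ₁] = ε·u·sign(g+σ₁)`, or (`p_ε = 0`)
`σ₂ = ⌊t(g+σ₁)⌋ − t(g+σ₁) + u` with the same sign as `g+σ₁`, or (`p_ε = 1`)
`σ₂ = ⌊t(g+σ₁)⌋ − t(g+σ₁)` with the same sign as `g+σ₁`, then
`E[σ₂·g] > 0`. -/
theorem stmt_7 {Ω : Type*} [MeasurableSpace Ω] (μ : Measure Ω)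
    [IsProbabilityMeasure μ] (g σ₁ σ₂ : Ω → ℝ) (t u ε : ℝ)
    (ht : 0 < t) (hu : 0 < u) (hε0 : 0 < ε) (hε1 : ε < 1)
    (m : MeasurableSpace Ω) (hm : m ≤ ‹MeasurableSpace Ω›)
    (hmdef : m = MeasurableSpace.comap (fun ω => (g ω, σ₁ ω)) inferInstance)
    (hsign : ∀ ω, Real.sign (g ω + σ₁ ω) = Real.sign (g ω) ∧ g ω ≠ 0)
    (hint : Integrable (fun ω => σ₂ ω * g ω) μ)
    (hcase : ∀ᵐ ω ∂μ,
      (μ[σ₂|m]) ω = ε * u * Real.sign (g ω + σ₁ ω)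
      ∨ (σ₂ ω = u * ⌊t * (g ω + σ₁ ω) / u⌋ - t * (g ω + σ₁ ω) + u
          ∧ Real.sign (σ₂ ω) = Real.sign (g ω + σ₁ ω))
      ∨ (σ₂ ω = u * ⌊t * (g ω + σ₁ ω) / u⌋ - t * (g ω + σ₁ ω)
          ∧ Real.sign (σ₂ ω) = Real.sign (g ω + σ₁ ω))) :
    0 < ∫ ω, σ₂ ω * g ω ∂μ := by
  have hpair : Measurable[m] (fun ω => (g ω, σ₁ ω)) := by
    rw [hmdef]; exact comap_measurable _
  refine integral_mul_pos_of_ae_condExp_eq_sign_or_sign_eq (c := ε * u) (by positivity)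
    (measurable_fst.comp hpair).stronglyMeasurable (ae_of_all _ fun ω => (hsign ω).2) hint ?_
  filter_upwards [hcase] with ω hω
  rw [(hsign ω).1] at hω
  exact hω.imp_right fun h => h.elim (·.2) (·.2)
end

section
/- Let g ∈ ℝⁿ, σ₁ ∈ ℝⁿ with |σ₁,ᵢ| ≤ |gᵢ| for all i, and t, u > 0. Suppose for each i that |gᵢ + σ₁,ᵢ| ≥ u/t (Case I condition) and |σ₂,ᵢ| ≤ u. Define the relative error rᵢ = (t σ₁,ᵢ + σ₂,ᵢ)/(t gᵢ) for gᵢ ≠ 0, where additionally σ₂,ᵢ = 0 whenever t|gᵢ + σ₁,ᵢ| = u. Then −1 ≤ rᵢ ≤ 3 for all i. -/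
/-! It suffices that `|rᵢ - 1| ≤ 2`, i.e. `|t σ₁ᵢ + σ₂ᵢ - t gᵢ| ≤ 2 t |gᵢ|`. The Case I condition
dominates the rounding error, `|σ₂ᵢ| ≤ u ≤ t |gᵢ + σ₁ᵢ|`, and `|σ₁ - g| + |σ₁ + g| = 2 max(|σ₁|, |g|)`,
which is `2 |g|` when `|σ₁| ≤ |g|`. -/

section

variable {α : Type*}

theorem abs_sub_add_abs_add_of_abs_le [AddCommGroup α] [LinearOrder α] [IsOrderedAddMonoid α]
    {a b : α} (h : |a| ≤ |b|) : |a - b| + |a + b| = |b| + |b| := by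
  rcases abs_le.1 h with ⟨hl, hr⟩
  rcases le_total 0 b with hb | hb
  · rw [abs_of_nonneg hb] at hl hr
    rw [abs_of_nonpos (sub_nonpos.2 hr), abs_of_nonneg (neg_le_iff_add_nonneg.1 hl),
      abs_of_nonneg hb]
    abel
  · rw [abs_of_nonpos hb] at hl hr
    rw [neg_neg] at hl
    rw [abs_of_nonneg (sub_nonneg.2 hl), abs_of_nonpos (le_neg_iff_add_nonpos_right.1 hr),
      abs_of_nonpos hb]
    abel

theorem neg_one_le_div_and_div_le_three_of_abs_sub_le [Field α] [LinearOrder α]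
    [IsOrderedRing α] {x y : α} (h : |x - y| ≤ 2 * |y|) : -1 ≤ x / y ∧ x / y ≤ 3 := by
  rcases eq_or_ne y 0 with rfl | hy
  · norm_num -- `x / 0 = 0`
  have hrel : |x / y - 1| ≤ 2 := by
    rwa [div_sub_one hy, abs_div, div_le_iff₀ (abs_pos.2 hy)]
  constructor <;> linarith [abs_sub_le_iff.1 hrel]

end

theorem abs_update_error_le {g σ₁ σ₂ t u : ℝ} (ht : 0 < t) (hσ₁ : |σ₁| ≤ |g|)
    (hcase1 : u / t ≤ |g + σ₁|) (hσ₂ : |σ₂| ≤ u) :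
    |t * σ₁ + σ₂ - t * g| ≤ 2 * |t * g| := by
  have hu : u ≤ t * |σ₁ + g| := by
    rw [add_comm]
    exact (div_le_iff₀' ht).1 hcase1
  calc |t * σ₁ + σ₂ - t * g| = |t * (σ₁ - g) + σ₂| := by ring_nf
    _ ≤ t * |σ₁ - g| + t * |σ₁ + g| := by
      grw [abs_add_le, abs_mul, abs_of_pos ht, hσ₂, hu]
    _ = 2 * |t * g| := by
      rw [← mul_add, abs_sub_add_abs_add_of_abs_le hσ₁, abs_mul, abs_of_pos ht]
      ring

theorem stmt_8_general (n : ℕ) (g σ₁ σ₂ : Fin n → ℝ) (t u : ℝ)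
    (ht : 0 < t)
    (hσ₁ : ∀ i, |σ₁ i| ≤ |g i|)
    (hcase1 : ∀ i, u / t ≤ |g i + σ₁ i|)
    (hσ₂ : ∀ i, |σ₂ i| ≤ u) :
    ∀ i, -1 ≤ (t * σ₁ i + σ₂ i) / (t * g i)
      ∧ (t * σ₁ i + σ₂ i) / (t * g i) ≤ 3 := fun i =>
  neg_one_le_div_and_div_le_three_of_abs_sub_le
    (abs_update_error_le ht (hσ₁ i) (hcase1 i) (hσ₂ i))

/-- Lemma bound_h: under the Case I condition
`|gᵢ + σ₁ᵢ| ≥ u/t` together with the non-opposite sign condition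
`|σ₁ᵢ| ≤ |gᵢ|`, `|σ₂ᵢ| ≤ u`, and `σ₂ᵢ = 0` whenever `t|gᵢ + σ₁ᵢ| = u`,
the relative error `rᵢ = (tσ₁ᵢ + σ₂ᵢ)/(t·gᵢ)` satisfies `−1 ≤ rᵢ ≤ 3`. -/
theorem stmt_8 (n : ℕ) (g σ₁ σ₂ : Fin n → ℝ) (t u : ℝ)
    (ht : 0 < t) (hu : 0 < u)
    (hσ₁ : ∀ i, |σ₁ i| ≤ |g i|)
    (hcase1 : ∀ i, u / t ≤ |g i + σ₁ i|)
    (hσ₂ : ∀ i, |σ₂ i| ≤ u)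
    (hexact : ∀ i, t * |g i + σ₁ i| = u → σ₂ i = 0) :
    ∀ i, -1 ≤ (t * σ₁ i + σ₂ i) / (t * g i)
      ∧ (t * σ₁ i + σ₂ i) / (t * g i) ≤ 3 :=
  stmt_8_general n g σ₁ σ₂ t u ht hσ₁ hcase1 hσ₂
end

section
/- Under the hypotheses of the previous statement (PL with 0 < μ ≤ L/2, componentwise update d_i = t(1+r_i)∇f(x)_i with 0 ≤ 1+r_i ≤ 4, t < 1/(4L)), a single step satisfies f(x^{(k+1)}) − f* ≤ (1 − tμγ_k)(f(x^{(k)}) − f*) where γ_k = min_i(1 + r^{(k)}_i). -/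
/-!
Along the segment `s ↦ x + s • v`, the Lipschitz bound on the gradient makes the slope of `f`
at most that of the parabola `f x + s ⟪∇f x, v⟫ + L s² ‖v‖² / 2`, which gives the descent lemma.
For the coordinatewise step `a ⊙ ∇f x` with `0 ≤ a i` and `L a i ≤ 1`, the quadratic term is at
most half the linear one, so `f` drops by at least `½ ∑ a i (∇f x)ᵢ²`. With `a i = t (1 + r i)`
this is at least `t γ ‖∇f x‖² / 2 ≥ t γ μ (f x - f*)` by the PL inequality.
-/

open scoped RealInnerProductSpace

theorem image_add_le_of_norm_gradient_sub_le {E : Type*} [NormedAddCommGroup E]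
    [InnerProductSpace ℝ E] [CompleteSpace E] {f : E → ℝ} {L : ℝ} (hf : Differentiable ℝ f)
    (hLip : ∀ y z, ‖gradient f y - gradient f z‖ ≤ L * ‖y - z‖) (x v : E) :
    f (x + v) ≤ f x + ⟪gradient f x, v⟫ + L / 2 * ‖v‖ ^ 2 := by
  have hline : ∀ s : ℝ,
      HasDerivAt (fun s : ℝ => f (x + s • v)) ⟪gradient f (x + s • v), v⟫ s := by
    intro s
    have hpath : HasDerivAt (fun s : ℝ => x + s • v) v s := by
      simpa using ((hasDerivAt_id s).smul_const v).const_add x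
    simpa [Function.comp_def] using
      (hf (x + s • v)).hasGradientAt.hasFDerivAt.comp_hasDerivAt s hpath
  have hparabola : ∀ s : ℝ,
      HasDerivAt (fun s : ℝ => f x + s * ⟪gradient f x, v⟫ + L / 2 * s ^ 2 * ‖v‖ ^ 2)
        (⟪gradient f x, v⟫ + L * s * ‖v‖ ^ 2) s := by
    intro s
    have h := (((hasDerivAt_id s).mul_const ⟪gradient f x, v⟫).const_add (f x)).add
      (((hasDerivAt_pow 2 s).const_mul (L / 2)).mul_const (‖v‖ ^ 2))
    exact h.congr_deriv (by push_cast; ring)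
  have hslope : ∀ s, 0 ≤ s →
      ⟪gradient f (x + s • v), v⟫ ≤ ⟪gradient f x, v⟫ + L * s * ‖v‖ ^ 2 := by
    intro s hs
    calc ⟪gradient f (x + s • v), v⟫
        = ⟪gradient f x, v⟫ + ⟪gradient f (x + s • v) - gradient f x, v⟫ := by
          rw [inner_sub_left]; ring
      _ ≤ ⟪gradient f x, v⟫ + ‖gradient f (x + s • v) - gradient f x‖ * ‖v‖ := by
          gcongr; exact real_inner_le_norm _ _
      _ ≤ ⟪gradient f x, v⟫ + L * ‖(x + s • v) - x‖ * ‖v‖ := by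
          gcongr; exact hLip _ _
      _ = ⟪gradient f x, v⟫ + L * s * ‖v‖ ^ 2 := by
          rw [add_sub_cancel_left, norm_smul, Real.norm_of_nonneg hs]; ring
  have hcompare := image_le_of_deriv_right_le_deriv_boundary (a := 0) (b := 1)
    (fun s _ => (hline s).continuousAt.continuousWithinAt)
    (fun s _ => (hline s).hasDerivWithinAt) (by simp)
    (fun s _ => (hparabola s).continuousAt.continuousWithinAt)
    (fun s _ => (hparabola s).hasDerivWithinAt) (fun s hs => hslope s hs.1)
    (Set.right_mem_Icc.2 zero_le_one)
  simpa using hcompare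

namespace EuclideanSpace

variable {ι : Type*} [Fintype ι]

theorem inner_toLp_mul (a : ι → ℝ) (v : EuclideanSpace ℝ ι) :
    ⟪v, WithLp.toLp 2 (fun i => a i * v i)⟫ = ∑ i, a i * v i ^ 2 := by
  simp only [PiLp.inner_apply, RCLike.inner_apply, conj_trivial]
  exact Finset.sum_congr rfl fun i _ => by ring

theorem norm_toLp_mul_sq (a : ι → ℝ) (v : EuclideanSpace ℝ ι) :
    ‖WithLp.toLp 2 (fun i => a i * v i)‖ ^ 2 = ∑ i, a i ^ 2 * v i ^ 2 := by
  simp only [real_norm_sq_eq, mul_pow]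

theorem mul_norm_sq_le_sum_mul_sq {a : ι → ℝ} {c : ℝ} (hc : ∀ i, c ≤ a i)
    (v : EuclideanSpace ℝ ι) : c * ‖v‖ ^ 2 ≤ ∑ i, a i * v i ^ 2 := by
  rw [real_norm_sq_eq, Finset.mul_sum]
  exact Finset.sum_le_sum fun i _ => mul_le_mul_of_nonneg_right (hc i) (sq_nonneg _)

end EuclideanSpace

theorem image_sub_diagonal_gradient_step_le {ι : Type*} [Fintype ι]
    {f : EuclideanSpace ℝ ι → ℝ} {L : ℝ} (hf : Differentiable ℝ f)
    (hLip : ∀ y z, ‖gradient f y - gradient f z‖ ≤ L * ‖y - z‖) (x : EuclideanSpace ℝ ι)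
    {a : ι → ℝ} (ha : ∀ i, 0 ≤ a i ∧ L * a i ≤ 1) :
    f (x - WithLp.toLp 2 (fun i => a i * gradient f x i))
      ≤ f x - 1 / 2 * ∑ i, a i * gradient f x i ^ 2 := by
  have hquad : L * ∑ i, a i ^ 2 * gradient f x i ^ 2 ≤ ∑ i, a i * gradient f x i ^ 2 := by
    rw [Finset.mul_sum]
    refine Finset.sum_le_sum fun i _ => ?_
    have hai : L * a i ^ 2 ≤ a i := by nlinarith [ha i]
    nlinarith [sq_nonneg (gradient f x i)]
  have hdescent := image_add_le_of_norm_gradient_sub_le hf hLip x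
    (-WithLp.toLp 2 (fun i => a i * gradient f x i))
  rw [← sub_eq_add_neg, inner_neg_right, norm_neg, EuclideanSpace.inner_toLp_mul,
    EuclideanSpace.norm_toLp_mul_sq] at hdescent
  linarith

theorem stmt_11_general (n : ℕ) (f : EuclideanSpace ℝ (Fin n) → ℝ)
    (L μ t fstar γ : ℝ) (x : EuclideanSpace ℝ (Fin n)) (r : Fin n → ℝ)
    (hdiff : Differentiable ℝ f)
    (hLip : ∀ y z, ‖gradient f y - gradient f z‖ ≤ L * ‖y - z‖)
    (hPL : ∀ y, 2 * μ * (f y - fstar) ≤ ‖gradient f y‖ ^ 2)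
    (ht : 0 < t) (htL : t < 1 / (4 * L))
    (hr : ∀ i, 0 ≤ 1 + r i ∧ 1 + r i ≤ 4)
    (hγ : (∀ i, γ ≤ 1 + r i) ∧ ∃ i, γ = 1 + r i) :
    f (x - (WithLp.equiv 2 (Fin n → ℝ)).symm
        (fun i => t * (1 + r i) * gradient f x i)) - fstar
      ≤ (1 - t * μ * γ) * (f x - fstar) := by
  have h4L : 0 < 4 * L := one_div_pos.mp (ht.trans htL)
  have h4Lt : 4 * L * t < 1 := by rwa [lt_div_iff₀ h4L, mul_comm] at htL
  have hsteps : ∀ i, 0 ≤ t * (1 + r i) ∧ L * (t * (1 + r i)) ≤ 1 := fun i =>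
    ⟨mul_nonneg ht.le (hr i).1, by nlinarith [hr i]⟩
  have hdesc := image_sub_diagonal_gradient_step_le hdiff hLip x hsteps
  have hsum : ∑ i, t * (1 + r i) * gradient f x i ^ 2
      = t * ∑ i, (1 + r i) * gradient f x i ^ 2 := by
    simp only [Finset.mul_sum, mul_assoc]
  have hγ0 : 0 ≤ γ := by obtain ⟨i, rfl⟩ := hγ.2; exact (hr i).1
  have hweights := EuclideanSpace.mul_norm_sq_le_sum_mul_sq hγ.1 (gradient f x)
  rw [WithLp.equiv_symm_apply]
  calc _ ≤ f x - fstar - 1 / 2 * (t * ∑ i, (1 + r i) * gradient f x i ^ 2) := by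
        linarith
    _ ≤ f x - fstar - 1 / 2 * (t * (γ * (2 * μ * (f x - fstar)))) := by
        gcongr
        exact (mul_le_mul_of_nonneg_left (hPL x) hγ0).trans hweights
    _ = (1 - t * μ * γ) * (f x - fstar) := by ring

/-- one-step descent inequality for perturbed gradient descent
under the PL condition: with `d_i = t(1 + r_i)·∇f(x)_i`, `0 ≤ 1 + r_i ≤ 4`,
`t < 1/(4L)`, and `γ = min_i (1 + r_i)`,
`f(x − d) − f* ≤ (1 − tμγ)(f(x) − f*)`. -/
theorem stmt_11 (n : ℕ) (f : EuclideanSpace ℝ (Fin n) → ℝ)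
    (L μ t fstar γ : ℝ) (x : EuclideanSpace ℝ (Fin n)) (r : Fin n → ℝ)
    (hdiff : Differentiable ℝ f)
    (hL : 0 < L)
    (hLip : ∀ y z, ‖gradient f y - gradient f z‖ ≤ L * ‖y - z‖)
    (hμ : 0 < μ) (hμL : μ ≤ L / 2)
    (hfstar : ∀ y, fstar ≤ f y)
    (hPL : ∀ y, 2 * μ * (f y - fstar) ≤ ‖gradient f y‖ ^ 2)
    (ht : 0 < t) (htL : t < 1 / (4 * L))
    (hr : ∀ i, 0 ≤ 1 + r i ∧ 1 + r i ≤ 4)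
    (hγ : (∀ i, γ ≤ 1 + r i) ∧ ∃ i, γ = 1 + r i) :
    f (x - (WithLp.equiv 2 (Fin n → ℝ)).symm
        (fun i => t * (1 + r i) * gradient f x i)) - fstar
      ≤ (1 - t * μ * γ) * (f x - fstar) :=
  stmt_11_general n f L μ t fstar γ x r hdiff hLip hPL ht htL hr hγ
end

section
/- Consider SR_ε rounding on grid uℤ applied to t·a where |t·a| < u/2 (so RN(t·a) = 0, i.e., round-to-nearest stagnates), a ≠ 0, t, u > 0, 0 < ε < 1. If ε ≥ 1 − |t·a|/u then E[SR_ε(t·a)] = u·sign(a); otherwise E[SR_ε(t·a)] = t·a + ε·u·sign(a). In both cases |E[SR_ε(t·a)]| > |t·a|, so SR_ε prevents the vanishing-update problem and increases the expected stepsize in the direction of a. -/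
/-- The grid floor: the largest point of the uniform grid `uℤ` that is `≤ x`. -/
noncomputable def gridFloor (u x : ℝ) : ℝ := u * ⌊x / u⌋

/-- The probability that `SR_ε` rounds `x` down. -/
noncomputable def pEps (u ε x : ℝ) : ℝ :=
  max 0 (min 1 (1 - (x - gridFloor u x) / u - Real.sign x * ε))

/-- The expected value of `SR_ε(x)`. -/
noncomputable def expSREps (u ε x : ℝ) : ℝ :=
  pEps u ε x * gridFloor u x + (1 - pEps u ε x) * (gridFloor u x + u)

/-!
Below one grid spacing the grid floor of `x ≠ 0` is `0` or `-u`, and the clamp in `pEps` then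
gives the closed form `E[SR_ε(x)] = sign x * min u (|x| + ε u)`: in expectation `SR_ε` pushes
`|x|` up by `ε u`, capped at the neighbouring grid point. Both cases of the proposition, and
`|E[SR_ε(x)]| > |x|`, are read off this formula.
-/

lemma Real.sign_mul_of_pos {t : ℝ} (ht : 0 < t) (a : ℝ) : Real.sign (t * a) = Real.sign a := by
  rcases lt_trichotomy a 0 with ha | rfl | ha
  · rw [Real.sign_of_neg ha, Real.sign_of_neg (mul_neg_of_pos_of_neg ht ha)]
  · rw [mul_zero]
  · rw [Real.sign_of_pos ha, Real.sign_of_pos (mul_pos ht ha)]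

lemma Real.sign_mul_abs (x : ℝ) : Real.sign x * |x| = x := by
  rcases lt_trichotomy x 0 with hx | rfl | hx
  · rw [Real.sign_of_neg hx, abs_of_neg hx, neg_one_mul, neg_neg]
  · rw [abs_zero, mul_zero]
  · rw [Real.sign_of_pos hx, abs_of_pos hx, one_mul]

lemma Real.abs_sign_of_ne_zero {x : ℝ} (hx : x ≠ 0) : |Real.sign x| = 1 := by
  rcases Real.sign_apply_eq_of_ne_zero x hx with h | h <;> simp [h]

lemma gridFloor_of_nonneg_of_lt {u x : ℝ} (hu : 0 < u) (hx0 : 0 ≤ x) (hxu : x < u) :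
    gridFloor u x = 0 := by
  have : ⌊x / u⌋ = 0 := Int.floor_eq_zero_iff.mpr ⟨div_nonneg hx0 hu.le, (div_lt_one hu).mpr hxu⟩
  simp [gridFloor, this]

lemma gridFloor_of_neg_of_neg_le {u x : ℝ} (hu : 0 < u) (hx0 : x < 0) (hxu : -u ≤ x) :
    gridFloor u x = -u := by
  have : ⌊x / u⌋ = -1 := by
    rw [Int.floor_eq_iff]
    push_cast
    constructor
    · rwa [le_div_iff₀ hu, neg_one_mul]
    · simpa using div_neg_of_neg_of_pos hx0 hu
  simp [gridFloor, this]

lemma expSREps_eq_gridFloor_add (u ε x : ℝ) :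
    expSREps u ε x = gridFloor u x + (1 - pEps u ε x) * u := by
  unfold expSREps
  ring

lemma expSREps_of_pos_of_lt {u ε x : ℝ} (hu : 0 < u) (hε : 0 ≤ ε) (hx0 : 0 < x) (hxu : x < u) :
    expSREps u ε x = min u (x + ε * u) := by
  have hfloor := gridFloor_of_nonneg_of_lt hu hx0.le hxu
  have hp : pEps u ε x = max 0 (1 - (x + ε * u) / u) := by
    have : 0 ≤ x / u + ε := by positivity
    rw [pEps, hfloor, Real.sign_of_pos hx0, sub_zero, one_mul, min_eq_right (by linarith), add_div,
      mul_div_cancel_right₀ _ hu.ne']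
    ring_nf
  rw [expSREps_eq_gridFloor_add, hfloor, hp, zero_add, ← min_sub_sub_left, sub_zero,
    sub_sub_cancel, min_mul_of_nonneg _ _ hu.le, one_mul, div_mul_cancel₀ _ hu.ne']

lemma expSREps_of_neg_of_neg_le {u ε x : ℝ} (hu : 0 < u) (hε : 0 ≤ ε) (hx0 : x < 0) (hxu : -u ≤ x) :
    expSREps u ε x = -min u (-x + ε * u) := by
  have hfloor := gridFloor_of_neg_of_neg_le hu hx0 hxu
  have hp : pEps u ε x = min 1 ((-x + ε * u) / u) := by
    have : 0 ≤ (-x + ε * u) / u := div_nonneg (by nlinarith) hu.le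
    have hc : 1 - (x - -u) / u - -1 * ε = (-x + ε * u) / u := by
      field_simp
      ring
    rw [pEps, hfloor, Real.sign_of_neg hx0, hc, max_eq_right (le_min zero_le_one this)]
  rw [expSREps_eq_gridFloor_add, hfloor, hp, show ∀ p : ℝ, -u + (1 - p) * u = -(p * u) by
    intro p; ring, min_mul_of_nonneg _ _ hu.le, one_mul, div_mul_cancel₀ _ hu.ne']

lemma expSREps_eq_sign_mul_min {u ε x : ℝ} (hu : 0 < u) (hε : 0 ≤ ε) (hx0 : x ≠ 0)
    (hxu : |x| < u) : expSREps u ε x = Real.sign x * min u (|x| + ε * u) := by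
  rcases hx0.lt_or_gt with hneg | hpos
  · rw [abs_of_neg hneg] at hxu ⊢
    rw [expSREps_of_neg_of_neg_le hu hε hneg (by linarith), Real.sign_of_neg hneg, neg_one_mul]
  · rw [abs_of_pos hpos] at hxu ⊢
    rw [expSREps_of_pos_of_lt hu hε hpos hxu, Real.sign_of_pos hpos, one_mul]

theorem stmt_19_general (a t u ε : ℝ) (ha : a ≠ 0) (ht : 0 < t) (hu : 0 < u)
    (hε0 : 0 < ε) (hsmall : |t * a| < u / 2) :
    (1 - |t * a| / u ≤ ε → expSREps u ε (t * a) = u * Real.sign a)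
    ∧ (ε < 1 - |t * a| / u →
        expSREps u ε (t * a) = t * a + ε * u * Real.sign a)
    ∧ |t * a| < |expSREps u ε (t * a)| := by
  have hx0 : t * a ≠ 0 := mul_ne_zero ht.ne' ha
  have hE := expSREps_eq_sign_mul_min hu hε0.le hx0 (by linarith [abs_nonneg (t * a)])
  have hcond : 1 - |t * a| / u ≤ ε ↔ u ≤ |t * a| + ε * u := by
    rw [sub_le_iff_le_add, add_comm, ← one_le_div hu, add_div, mul_div_cancel_right₀ _ hu.ne']
  rw [← Real.sign_mul_of_pos ht a]
  refine ⟨fun h => ?_, fun h => ?_, ?_⟩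
  · rw [hE, min_eq_left (hcond.mp h), mul_comm]
  · rw [hE, min_eq_right (not_le.mp (hcond.not.mp h.not_ge)).le, mul_add, Real.sign_mul_abs]
    ring
  · have hlt : |t * a| < min u (|t * a| + ε * u) :=
      lt_min (by linarith) (lt_add_of_pos_right _ (mul_pos hε0 hu))
    rwa [hE, abs_mul (Real.sign _), Real.abs_sign_of_ne_zero hx0, one_mul,
      abs_of_pos ((abs_nonneg _).trans_lt hlt)]

/-- Proposition dfixed: applying `SR_ε` to `t·a` with
`|t·a| < u/2` (so round-to-nearest stagnates): if `ε ≥ 1 − |t·a|/u` then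
`E[SR_ε(t·a)] = u·sign(a)`, otherwise `E[SR_ε(t·a)] = t·a + ε·u·sign(a)`;
in both cases `|E[SR_ε(t·a)]| > |t·a|`. -/
theorem stmt_19 (a t u ε : ℝ) (ha : a ≠ 0) (ht : 0 < t) (hu : 0 < u)
    (hε0 : 0 < ε) (hε1 : ε < 1) (hsmall : |t * a| < u / 2) :
    (1 - |t * a| / u ≤ ε → expSREps u ε (t * a) = u * Real.sign a)
    ∧ (ε < 1 - |t * a| / u →
        expSREps u ε (t * a) = t * a + ε * u * Real.sign a)
    ∧ |t * a| < |expSREps u ε (t * a)| :=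
  stmt_19_general a t u ε ha ht hu hε0 hsmall
end
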